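/- Let (A, R) be a Rota-Baxter algebra of weight zero and define ω₃(x,y,z) = x·R(R(y)·z), ω₄(x,y,z) = R(R(x)·y)·z, ω₅(x,y,z) = R(x·R(y))·z. Then for all v, w, x, y, z ∈ A one has ω₃(v, ω₃(w,x,y), z) + ω₃(v, ω₄(w,x,y), z) + ω₃(v, ω₅(w,x,y), z) = ω₃(v, w, ω₄(x,y,z)). -/
import Mathlib


theorem STMT {A : Type*} [NonUnitalRing A] [Module ℚ A]
    [SMulCommClass ℚ A A] [IsScalarTower ℚ A A]
    (R : A →ₗ[ℚ] A)
    (hR : ∀ x y : A, R x * R y = R (R x * y) + R (x * R y)) :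
    ∀ v w x y z : A,
      (fun x y z : A => x * R (R y * z)) v ((fun x y z : A => x * R (R y * z)) w x y) z + (fun x y z : A => x * R (R y * z)) v ((fun x y z : A => R (R x * y) * z) w x y) z + (fun x y z : A => x * R (R y * z)) v ((fun x y z : A => R (x * R y) * z) w x y) z = (fun x y z : A => x * R (R y * z)) v w ((fun x y z : A => R (R x * y) * z) x y z) := by
  intro v w x y z
  simp only
  rw [← mul_add, ← mul_add, ← map_add, ← map_add, ← add_mul, ← add_mul, add_assoc,
    ← map_add, ← add_mul, ← hR, mul_assoc (R w) (R x) y, add_comm, ← hR,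
    mul_assoc (R w)]
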